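/- arXiv:1808.02972 — 4 statements merged into one kernel-verified Lean document; each statement's English description precedes it below -/
import Mathlib

section
/- Let (M,h) be a Riemannian manifold of nonpositive sectional curvature and W a Killing vector field on M. Then W has constant length 1 (i.e. defines a strong Kropina structure) if and only if W is parallel. -/
noncomputable section

open scoped BigOperators ENNReal

/-- Model space: `ℝⁿ` as a chart of the manifold `M`. -/
abbrev Evec (n : ℕ) := EuclideanSpace ℝ (Fin n)

/-- A (pointwise bilinear-form valued) metric tensor on `ℝⁿ`. -/
abbrev MetricT (n : ℕ) := Evec n → (Evec n →L[ℝ] Evec n →L[ℝ] ℝ)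

/-- A metric tensor is Riemannian: smooth, symmetric and positive definite. -/
def IsRiemannian {n : ℕ} (g : MetricT n) : Prop :=
  ContDiff ℝ (⊤ : ℕ∞) g ∧ (∀ x u v, g x u v = g x v u) ∧ (∀ x v, v ≠ 0 → 0 < g x v v)

/-- Lie bracket of vector fields on `ℝⁿ`. -/
def VBracket {n : ℕ} (X Y : Evec n → Evec n) : Evec n → Evec n :=
  fun x => fderiv ℝ Y x (X x) - fderiv ℝ X x (Y x)

/-- The Lie derivative `(L_W g)(X,Y)` of the metric `g` along `W`, evaluated on
vector fields `X`, `Y`. -/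
def LieDerivMetric {n : ℕ} (g : MetricT n) (W X Y : Evec n → Evec n) : Evec n → ℝ :=
  fun x => fderiv ℝ (fun p => g p (X p) (Y p)) x (W x)
    - g x (VBracket W X x) (Y x) - g x (X x) (VBracket W Y x)

/-- `W` is a Killing field of `g` : `L_W g = 0`. -/
def IsKillingField {n : ℕ} (g : MetricT n) (W : Evec n → Evec n) : Prop :=
  ∀ X Y : Evec n → Evec n, ContDiff ℝ (⊤ : ℕ∞) X → ContDiff ℝ (⊤ : ℕ∞) Y →
    ∀ x, LieDerivMetric g W X Y x = 0

/-- The Levi-Civita connection of `g`, given as a covariant derivative operator on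
vector fields which is tensorial in the first slot, a derivation in the second slot,
torsion free, and metric compatible. -/
structure LeviCivita {n : ℕ} (g : MetricT n) where
  nab : (Evec n → Evec n) → (Evec n → Evec n) → (Evec n → Evec n)
  compat : ∀ X Y Z : Evec n → Evec n, ContDiff ℝ (⊤ : ℕ∞) X → ContDiff ℝ (⊤ : ℕ∞) Y → ContDiff ℝ (⊤ : ℕ∞) Z →
    ∀ x, fderiv ℝ (fun p => g p (Y p) (Z p)) x (X x)
      = g x (nab X Y x) (Z x) + g x (Y x) (nab X Z x)
  torsion_free : ∀ X Y : Evec n → Evec n, ContDiff ℝ (⊤ : ℕ∞) X → ContDiff ℝ (⊤ : ℕ∞) Y →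
    ∀ x, nab X Y x - nab Y X x = VBracket X Y x
  tensorial : ∀ (f : Evec n → ℝ) (X Y : Evec n → Evec n) (x : Evec n),
    nab (fun p => f p • X p) Y x = f x • nab X Y x
  leibniz : ∀ (f : Evec n → ℝ) (X Y : Evec n → Evec n), ContDiff ℝ (⊤ : ℕ∞) f → ContDiff ℝ (⊤ : ℕ∞) Y →
    ∀ x, nab X (fun p => f p • Y p) x = fderiv ℝ f x (X x) • Y x + f x • nab X Y x

/-- A curve `c` is a geodesic for the covariant derivative `nab`: for every smooth
extension `V` of its velocity field, `∇_V V` vanishes along `c`. -/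
def IsGeodesicC {n : ℕ}
    (nab : (Evec n → Evec n) → (Evec n → Evec n) → (Evec n → Evec n))
    (c : ℝ → Evec n) : Prop :=
  ∀ V : Evec n → Evec n, ContDiff ℝ (⊤ : ℕ∞) V → (∀ t, V (c t) = deriv c t) →
    ∀ t, nab V V (c t) = 0

/-- The curvature tensor `R(u,v)w` at `x` (computed with constant extensions). -/
def RCurv {n : ℕ}
    (nab : (Evec n → Evec n) → (Evec n → Evec n) → (Evec n → Evec n))
    (u v w : Evec n) : Evec n → Evec n :=
  fun x => nab (fun _ => u) (nab (fun _ => v) (fun _ => w)) x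
    - nab (fun _ => v) (nab (fun _ => u) (fun _ => w)) x
    - nab (VBracket (fun _ => u) (fun _ => v)) (fun _ => w) x

/-- Ricci curvature `Ric_x(u,v)` as the trace (in the standard basis) of
`w ↦ R(w,u)v`. -/
def RicciCurv {n : ℕ}
    (nab : (Evec n → Evec n) → (Evec n → Evec n) → (Evec n → Evec n))
    (x u v : Evec n) : ℝ :=
  ∑ i : Fin n, (RCurv nab (EuclideanSpace.single i 1) u v x) i


section A
variable {n : ℕ} {g : MetricT n}

lemma fderiv_g_apply (hg : IsRiemannian g) {Y Z : Evec n → Evec n}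
    (hY : ContDiff ℝ (⊤ : ℕ∞) Y) (hZ : ContDiff ℝ (⊤ : ℕ∞) Z) (x v : Evec n) :
    fderiv ℝ (fun p => g p (Y p) (Z p)) x v
      = fderiv ℝ g x v (Y x) (Z x) + g x (fderiv ℝ Y x v) (Z x)
        + g x (Y x) (fderiv ℝ Z x v) := by
  have hgd : DifferentiableAt ℝ g x := hg.1.differentiable (by simp) x
  have hYd : DifferentiableAt ℝ Y x := hY.differentiable (by simp) x
  have hZd : DifferentiableAt ℝ Z x := hZ.differentiable (by simp) x
  have hc : DifferentiableAt ℝ (fun p => g p (Y p)) x := hgd.clm_apply hYd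
  rw [fderiv_clm_apply hc hZd]
  simp only [ContinuousLinearMap.add_apply, ContinuousLinearMap.coe_comp',
    Function.comp_apply, ContinuousLinearMap.flip_apply]
  rw [fderiv_clm_apply hgd hYd]
  simp only [ContinuousLinearMap.add_apply, ContinuousLinearMap.coe_comp',
    Function.comp_apply, ContinuousLinearMap.flip_apply]
  ring

lemma koszulE (hg : IsRiemannian g) (LC : LeviCivita g) {X Y : Evec n → Evec n}
    (hX : ContDiff ℝ (⊤ : ℕ∞) X) (hY : ContDiff ℝ (⊤ : ℕ∞) Y) (x z : Evec n) :
    2 * g x (LC.nab X Y x) z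
      = fderiv ℝ g x (X x) (Y x) z + fderiv ℝ g x (Y x) z (X x)
        - fderiv ℝ g x z (X x) (Y x) + 2 * g x (fderiv ℝ Y x (X x)) z := by
  have hZ : ContDiff ℝ (⊤ : ℕ∞) (fun _ : Evec n => z) := contDiff_const
  have A := LC.compat X Y (fun _ => z) hX hY hZ x
  have B := LC.compat Y (fun _ => z) X hY hZ hX x
  have C := LC.compat (fun _ => z) X Y hZ hX hY x
  rw [fderiv_g_apply hg hY hZ] at A
  rw [fderiv_g_apply hg hZ hX] at B
  rw [fderiv_g_apply hg hX hY] at C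
  simp only [fderiv_fun_const, Pi.zero_apply, ContinuousLinearMap.zero_apply, map_zero,
    ContinuousLinearMap.map_zero, add_zero, zero_add] at A B C
  -- torsion identities
  have T1 := LC.torsion_free X Y hX hY x
  have T2 := LC.torsion_free X (fun _ => z) hX hZ x
  have T3 := LC.torsion_free Y (fun _ => z) hY hZ x
  simp only [VBracket, fderiv_fun_const, Pi.zero_apply, ContinuousLinearMap.zero_apply,
    zero_sub] at T1 T2 T3
  have hQ : LC.nab Y X x = LC.nab X Y x - (fderiv ℝ Y x (X x) - fderiv ℝ X x (Y x)) := by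
    rw [← T1]; abel
  have hR : LC.nab X (fun _ => z) x = LC.nab (fun _ => z) X x - fderiv ℝ X x z := by
    rw [sub_eq_iff_eq_add] at T2; rw [T2]; abel
  have hS : LC.nab Y (fun _ => z) x = LC.nab (fun _ => z) Y x - fderiv ℝ Y x z := by
    rw [sub_eq_iff_eq_add] at T3; rw [T3]; abel
  rw [hR] at A
  rw [hQ, hS] at B
  simp only [map_sub, ContinuousLinearMap.sub_apply] at A B
  have s1 := hg.2.1 x (LC.nab (fun _ => z) X x) (Y x)
  have s2 := hg.2.1 x (X x) (LC.nab (fun _ => z) Y x)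
  have s3 := hg.2.1 x z (LC.nab X Y x)
  have s5 := hg.2.1 x (Y x) (fderiv ℝ X x z)
  have s6 := hg.2.1 x (fderiv ℝ Y x z) (X x)
  have s7 := hg.2.1 x z (fderiv ℝ Y x (X x))
  have s8 := hg.2.1 x z (fderiv ℝ X x (Y x))
  linarith [A, B, C, s1, s2, s3, s5, s6, s7, s8]

lemma eq_zero_of_g_nonpos (hg : IsRiemannian g) {x v : Evec n} (h : g x v v ≤ 0) : v = 0 := by
  by_contra hv
  exact absurd h (not_le.2 (hg.2.2 x v hv))

lemma smooth_g_apply (hg : IsRiemannian g) {Y Z : Evec n → Evec n}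
    (hY : ContDiff ℝ (⊤ : ℕ∞) Y) (hZ : ContDiff ℝ (⊤ : ℕ∞) Z) :
    ContDiff ℝ (⊤ : ℕ∞) (fun p => g p (Y p) (Z p)) :=
  (hg.1.clm_apply hY).clm_apply hZ

end A

def eb {n : ℕ} (i : Fin n) : Evec n := EuclideanSpace.single i 1

lemma comp_sum' {n : ℕ} (c : Fin n → ℝ) (s : Finset (Fin n)) (j : Fin n) :
    (∑ i ∈ s, c i • eb i) j = ∑ i ∈ s, c i * (if j = i then 1 else 0) := by
  induction s using Finset.induction with
  | empty => simp
  | @insert a s ha ih =>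
    rw [Finset.sum_insert ha, Finset.sum_insert ha, ← ih]
    have h1 : ∀ (u v : Evec n), (u + v) j = u j + v j := fun _ _ => rfl
    rw [h1]
    congr 1
    have h2 : ∀ (r : ℝ) (u : Evec n), (r • u) j = r * u j := fun _ _ => rfl
    rw [h2, eb, EuclideanSpace.single_apply]

lemma comp_sum {n : ℕ} (c : Fin n → ℝ) (j : Fin n) :
    (∑ i, c i • eb i) j = c j := by
  rw [comp_sum']
  simp

section B
variable {n : ℕ} {g : MetricT n}

lemma repr_eb {n : ℕ} (a : Evec n) : ∑ i, a i • eb i = a := by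
  ext j; rw [comp_sum]

lemma vec_eq_of_g (hg : IsRiemannian g) (x : Evec n) {a b : Evec n}
    (h : ∀ z, g x a z = g x b z) : a = b := by
  have h0 : g x (a - b) (a - b) = 0 := by
    simp only [map_sub, ContinuousLinearMap.sub_apply]
    have h1 := h a; have h2 := h b; linarith
  have := eq_zero_of_g_nonpos hg (le_of_eq h0)
  exact sub_eq_zero.1 this

lemma eq_zero_of_g_basis (hg : IsRiemannian g) (x : Evec n) {a : Evec n}
    (h : ∀ j, g x a (eb j) = 0) : a = 0 := by
  have h0 : g x a a = 0 := by
    have e1 : g x a a = g x a (∑ i, a i • eb i) := by rw [repr_eb]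
    rw [e1, map_sum]
    simp only [map_smul, smul_eq_mul]
    exact Finset.sum_eq_zero fun j _ => by rw [h j, mul_zero]
  exact eq_zero_of_g_nonpos hg (le_of_eq h0)

lemma nab_congr_fst (hg : IsRiemannian g) (LC : LeviCivita g) {X X' Y : Evec n → Evec n}
    (hX : ContDiff ℝ (⊤ : ℕ∞) X) (hX' : ContDiff ℝ (⊤ : ℕ∞) X') (hY : ContDiff ℝ (⊤ : ℕ∞) Y) {x : Evec n}
    (h : X x = X' x) : LC.nab X Y x = LC.nab X' Y x := by
  apply vec_eq_of_g hg x
  intro z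
  have h1 := koszulE hg LC hX hY x z
  have h2 := koszulE hg LC hX' hY x z
  rw [h] at h1; linarith

lemma nab_add_snd (hg : IsRiemannian g) (LC : LeviCivita g) {X Y Y' : Evec n → Evec n}
    (hX : ContDiff ℝ (⊤ : ℕ∞) X) (hY : ContDiff ℝ (⊤ : ℕ∞) Y) (hY' : ContDiff ℝ (⊤ : ℕ∞) Y') (x : Evec n) :
    LC.nab X (fun p => Y p + Y' p) x = LC.nab X Y x + LC.nab X Y' x := by
  apply vec_eq_of_g hg x
  intro z
  have h1 := koszulE hg LC hX (hY.add hY') x z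
  have h2 := koszulE hg LC hX hY x z
  have h3 := koszulE hg LC hX hY' x z
  have hd : fderiv ℝ (fun p => Y p + Y' p) x = fderiv ℝ Y x + fderiv ℝ Y' x :=
    fderiv_fun_add (hY.differentiable (by simp) x) (hY'.differentiable (by simp) x)
  rw [hd] at h1
  simp only [map_add, ContinuousLinearMap.add_apply] at h1 ⊢
  linarith

lemma nab_smulc (LC : LeviCivita g) (c : ℝ) {Y : Evec n → Evec n} (hY : ContDiff ℝ (⊤ : ℕ∞) Y)
    (X : Evec n → Evec n) (x : Evec n) :
    LC.nab X (fun p => c • Y p) x = c • LC.nab X Y x := by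
  have := LC.leibniz (fun _ => c) X Y contDiff_const hY x
  simpa using this

lemma nab_zero_fst (LC : LeviCivita g) (Y : Evec n → Evec n) (x : Evec n) :
    LC.nab (fun _ => 0) Y x = 0 := by
  have := LC.tensorial (fun _ => (0:ℝ)) Y Y x
  simpa using this

lemma nab_zero_snd (LC : LeviCivita g) (X : Evec n → Evec n) (x : Evec n) :
    LC.nab X (fun _ => 0) x = 0 := by
  have := nab_smulc LC 0 (contDiff_const (c := (0:Evec n))) X x
  simpa using this

lemma nab_sum_snd (hg : IsRiemannian g) (LC : LeviCivita g) {X : Evec n → Evec n}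
    (hX : ContDiff ℝ (⊤ : ℕ∞) X) {ι : Type} [DecidableEq ι] (s : Finset ι) (Y : ι → Evec n → Evec n)
    (hY : ∀ i ∈ s, ContDiff ℝ (⊤ : ℕ∞) (Y i)) (x : Evec n) :
    LC.nab X (fun p => ∑ i ∈ s, Y i p) x = ∑ i ∈ s, LC.nab X (Y i) x := by
  induction s using Finset.induction with
  | empty => simpa using nab_zero_snd LC X x
  | @insert a s ha ih =>
    have hsum : ContDiff ℝ (⊤ : ℕ∞) (fun p => ∑ i ∈ s, Y i p) :=
      ContDiff.sum fun i hi => hY i (Finset.mem_insert_of_mem hi)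
    have : (fun p => ∑ i ∈ insert a s, Y i p)
        = fun p => Y a p + ∑ i ∈ s, Y i p := by
      funext p; rw [Finset.sum_insert ha]
    rw [this, nab_add_snd hg LC hX (hY a (Finset.mem_insert_self a s)) hsum x,
      ih fun i hi => hY i (Finset.mem_insert_of_mem hi), Finset.sum_insert ha]

/-- The "index lowering/raising" operator of the metric. -/
def gT (g : MetricT n) : Evec n → (Evec n →L[ℝ] Evec n) :=
  fun x => ∑ i, (ContinuousLinearMap.smulRightL ℝ (Evec n) (Evec n) (g x (eb i))) (eb i)

lemma gT_contDiff (hg : IsRiemannian g) : ContDiff ℝ (⊤ : ℕ∞) (gT g) := by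
  apply ContDiff.sum
  intro i _
  have h1 : ContDiff ℝ (⊤ : ℕ∞) (fun x => g x (eb i)) := hg.1.clm_apply contDiff_const
  have h2 : ContDiff ℝ (⊤ : ℕ∞) (fun x =>
      ContinuousLinearMap.smulRightL ℝ (Evec n) (Evec n) (g x (eb i))) :=
    contDiff_const.clm_apply h1
  exact h2.clm_apply contDiff_const

lemma gT_apply (x a : Evec n) : gT g x a = ∑ i, g x (eb i) a • eb i := by
  simp only [gT, ContinuousLinearMap.sum_apply]
  exact Finset.sum_congr rfl fun d _ => rfl

lemma gT_comp (x a : Evec n) (j : Fin n) : gT g x a j = g x (eb j) a := by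
  rw [gT_apply]
  exact comp_sum (fun i => g x (eb i) a) j

lemma gT_isUnit (hg : IsRiemannian g) (x : Evec n) : IsUnit (gT g x) := by
  have hinj : Function.Injective (gT g x) := by
    intro a b hab
    have h0 : gT g x (a - b) = 0 := by rw [map_sub, hab, sub_self]
    have h1 : ∀ j, g x (a - b) (eb j) = 0 := by
      intro j
      rw [hg.2.1 x (a - b) (eb j), ← gT_comp, h0]
      rfl
    have := eq_zero_of_g_basis hg x h1
    exact sub_eq_zero.1 this
  have hinj' : Function.Injective ((gT g x : Evec n →ₗ[ℝ] Evec n)) := hinj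
  have hsurj := LinearMap.injective_iff_surjective.1 hinj'
  let e := LinearEquiv.ofBijective ((gT g x : Evec n →ₗ[ℝ] Evec n)) ⟨hinj', hsurj⟩
  let E := e.toContinuousLinearEquiv
  have hE : ∀ a, E a = gT g x a := fun a => by
    simp only [E, LinearEquiv.coe_toContinuousLinearEquiv]; rfl
  refine ⟨⟨gT g x, (E.symm : Evec n →L[ℝ] Evec n), ?_, ?_⟩, rfl⟩
  · ext a
    have : gT g x (E.symm a) = E (E.symm a) := (hE _).symm
    simp only [ContinuousLinearMap.mul_apply, ContinuousLinearMap.one_apply,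
      ContinuousLinearEquiv.coe_coe]
    rw [this, E.apply_symm_apply]
  · ext a
    simp only [ContinuousLinearMap.mul_apply, ContinuousLinearMap.one_apply,
      ContinuousLinearEquiv.coe_coe]
    rw [← hE, E.symm_apply_apply]

lemma nab_contDiff (hg : IsRiemannian g) (LC : LeviCivita g) {X Y : Evec n → Evec n}
    (hX : ContDiff ℝ (⊤ : ℕ∞) X) (hY : ContDiff ℝ (⊤ : ℕ∞) Y) : ContDiff ℝ (⊤ : ℕ∞) (LC.nab X Y) := by
  have hDgX : ∀ {V : Evec n → Evec n}, ContDiff ℝ (⊤ : ℕ∞) V →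
      ContDiff ℝ (⊤ : ℕ∞) (fun x => fderiv ℝ g x (V x)) := fun hV =>
    ContDiff.fderiv_apply (f := fun _ => g) (hg.1.comp contDiff_snd) contDiff_id hV (by simp)
  have hDY : ContDiff ℝ (⊤ : ℕ∞) (fderiv ℝ Y) := hY.fderiv_right (by simp)
  set Ψ : Evec n → Fin n → ℝ := fun x j =>
    (fderiv ℝ g x (X x) (Y x) (eb j) + fderiv ℝ g x (Y x) (eb j) (X x)
      - fderiv ℝ g x (eb j) (X x) (Y x)) / 2 + g x (fderiv ℝ Y x (X x)) (eb j) with hΨdef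
  have hΨ : ∀ j, ContDiff ℝ (⊤ : ℕ∞) (fun x => Ψ x j) := by
    intro j
    apply ContDiff.add
    · apply ContDiff.div_const
      apply ContDiff.sub
      apply ContDiff.add
      · exact ((hDgX hX).clm_apply hY).clm_apply contDiff_const
      · exact ((hDgX hY).clm_apply contDiff_const).clm_apply hX
      · exact ((hDgX contDiff_const).clm_apply hX).clm_apply hY
    · exact (hg.1.clm_apply (hDY.clm_apply hX)).clm_apply contDiff_const
  have hS : ContDiff ℝ (⊤ : ℕ∞) (fun x => ∑ j, Ψ x j • eb j) :=
    ContDiff.sum fun j _ => (hΨ j).smul contDiff_const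
  have key : ∀ x, gT g x (LC.nab X Y x) = ∑ j, Ψ x j • eb j := by
    intro x
    have hk := fun z => koszulE hg LC hX hY x z
    ext j
    rw [gT_comp]
    have h1 : (∑ j', Ψ x j' • eb j') j = Ψ x j := comp_sum (Ψ x) j
    rw [h1, hg.2.1 x (eb j) (LC.nab X Y x)]
    have := hk (eb j)
    simp only [hΨdef]
    linarith
  have huni : LC.nab X Y = fun x => Ring.inverse (gT g x) (∑ j, Ψ x j • eb j) := by
    funext x
    obtain ⟨u, hu⟩ := gT_isUnit hg x
    rw [← hu, Ring.inverse_unit]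
    have h2 : (u : Evec n →L[ℝ] Evec n) (LC.nab X Y x) = ∑ j, Ψ x j • eb j := by
      rw [hu]; exact key x
    rw [← h2]
    have h3 : ((u⁻¹ : (Evec n →L[ℝ] Evec n)ˣ) : Evec n →L[ℝ] Evec n)
        ((u : Evec n →L[ℝ] Evec n) (LC.nab X Y x))
        = ((↑u⁻¹ * ↑u : Evec n →L[ℝ] Evec n)) (LC.nab X Y x) := rfl
    rw [h3, u.inv_mul, ContinuousLinearMap.one_apply]
  have hinv : ContDiff ℝ (⊤ : ℕ∞) (fun x => Ring.inverse (gT g x)) := by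
    rw [contDiff_iff_contDiffAt]
    intro x
    obtain ⟨u, hu⟩ := gT_isUnit hg x
    have h4 : ContDiffAt ℝ (⊤ : ℕ∞) Ring.inverse (gT g x) := by
      rw [← hu]; exact contDiffAt_ringInverse ℝ u
    exact h4.comp x ((gT_contDiff hg).contDiffAt)
  rw [huni]
  exact hinv.clm_apply hS


lemma snd_symm {f : Evec n → ℝ} (hf : ContDiff ℝ (⊤ : ℕ∞) f) (x a b : Evec n) :
    fderiv ℝ (fun y => fderiv ℝ f y b) x a = fderiv ℝ (fun y => fderiv ℝ f y a) x b := by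
  have hdf : Differentiable ℝ (fderiv ℝ f) := (hf.fderiv_right (m := (⊤ : ℕ∞)) (by simp)).differentiable (by simp)
  have key : ∀ c d, fderiv ℝ (fun y => fderiv ℝ f y c) x d = fderiv ℝ (fderiv ℝ f) x d c := by
    intro c d
    rw [fderiv_clm_apply (hdf x) (differentiableAt_const c)]
    simp [ContinuousLinearMap.comp_zero]
  rw [key b a, key a b]
  have hs := (hf.contDiffAt (x := x)).isSymmSndFDerivAt (by rw [minSmoothness_of_isRCLikeNormedField]; exact WithTop.coe_le_coe.2 (le_top : (2 : ℕ∞) ≤ ⊤))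
  exact hs a b

lemma kill' (hg : IsRiemannian g) (LC : LeviCivita g) {W : Evec n → Evec n}
    (hW : ContDiff ℝ (⊤ : ℕ∞) W) (hK : IsKillingField g W) {X Y : Evec n → Evec n}
    (hX : ContDiff ℝ (⊤ : ℕ∞) X) (hY : ContDiff ℝ (⊤ : ℕ∞) Y) (x : Evec n) :
    g x (LC.nab X W x) (Y x) + g x (LC.nab Y W x) (X x) = 0 := by
  have h0 := hK X Y hX hY x
  unfold LieDerivMetric at h0
  have hc := LC.compat W X Y hW hX hY x
  have T1 := LC.torsion_free W X hW hX x
  have T2 := LC.torsion_free W Y hW hY x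
  rw [← T1, ← T2, hc] at h0
  simp only [map_sub, ContinuousLinearMap.sub_apply] at h0
  have s1 := hg.2.1 x (X x) (LC.nab Y W x)
  linarith

lemma g_nabW_W (hg : IsRiemannian g) (LC : LeviCivita g) {W : Evec n → Evec n}
    (hW : ContDiff ℝ (⊤ : ℕ∞) W) (hconst : ∀ x, g x (W x) (W x) = 1) {X : Evec n → Evec n}
    (hX : ContDiff ℝ (⊤ : ℕ∞) X) (x : Evec n) :
    g x (LC.nab X W x) (W x) = 0 := by
  have hc := LC.compat X W W hX hW hW x
  have h1 : (fun p => g p (W p) (W p)) = fun _ => (1:ℝ) := funext hconst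
  rw [h1] at hc
  simp only [fderiv_fun_const, Pi.zero_apply, ContinuousLinearMap.zero_apply] at hc
  have s := hg.2.1 x (W x) (LC.nab X W x)
  linarith

lemma vbracket_const (a b : Evec n) :
    VBracket (fun _ : Evec n => a) (fun _ => b) = fun _ => (0 : Evec n) := by
  funext x
  simp [VBracket]

lemma rcurv_eq (LC : LeviCivita g) (a b w x : Evec n) :
    RCurv LC.nab a b w x
      = LC.nab (fun _ => a) (LC.nab (fun _ => b) (fun _ => w)) x
        - LC.nab (fun _ => b) (LC.nab (fun _ => a) (fun _ => w)) x := by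
  unfold RCurv
  rw [vbracket_const, nab_zero_fst, sub_zero]

lemma hWi {W : Evec n → Evec n} (hW : ContDiff ℝ (⊤ : ℕ∞) W) (i : Fin n) :
    ContDiff ℝ (⊤ : ℕ∞) (fun p => W p i) := by
  have : (fun p => W p i) = fun p => (EuclideanSpace.proj (𝕜 := ℝ) i) (W p) := rfl
  rw [this]
  exact contDiff_const.clm_apply hW

lemma expandW (hg : IsRiemannian g) (LC : LeviCivita g) {W : Evec n → Evec n}
    (hW : ContDiff ℝ (⊤ : ℕ∞) W) (b : Evec n) (x : Evec n) :
    LC.nab (fun _ => b) W x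
      = ∑ i, (fderiv ℝ (fun p => W p i) x b • eb i
          + W x i • LC.nab (fun _ => b) (fun _ => eb i) x) := by
  have hrepr : W = fun p => ∑ i, W p i • eb i := by
    funext p; rw [repr_eb (W p)]
  conv_lhs => rw [hrepr]
  rw [nab_sum_snd hg LC contDiff_const Finset.univ (fun i => fun p => W p i • eb i)
    (fun i _ => (hWi hW i).smul contDiff_const) x]
  apply Finset.sum_congr rfl
  intro i _
  exact LC.leibniz (fun p => W p i) (fun _ => b) (fun _ => eb i) (hWi hW i) contDiff_const x

lemma curvid (hg : IsRiemannian g) (LC : LeviCivita g) {W : Evec n → Evec n}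
    (hW : ContDiff ℝ (⊤ : ℕ∞) W) (a b x : Evec n) :
    LC.nab (fun _ => a) (LC.nab (fun _ => b) W) x
      - LC.nab (fun _ => b) (LC.nab (fun _ => a) W) x
      = RCurv LC.nab a b (W x) x := by
  have hΓ : ∀ (c : Evec n) (i : Fin n),
      ContDiff ℝ (⊤ : ℕ∞) (LC.nab (fun _ => c) (fun _ => eb i)) := fun c i =>
    nab_contDiff hg LC contDiff_const contDiff_const
  have hfield : ∀ c : Evec n, LC.nab (fun _ => c) W
      = fun y => ∑ i, (fderiv ℝ (fun p => W p i) y c • eb i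
          + W y i • LC.nab (fun _ => c) (fun _ => eb i) y) :=
    fun c => funext (expandW hg LC hW c)
  have hDWi : ∀ (i : Fin n) (d : Evec n),
      ContDiff ℝ (⊤ : ℕ∞) (fun y => fderiv ℝ (fun p => W p i) y d) := fun i d =>
    ((hWi hW i).fderiv_right (by simp)).clm_apply contDiff_const
  have main : ∀ c d : Evec n,
      LC.nab (fun _ => c) (LC.nab (fun _ => d) W) x
        = ∑ i, ((fderiv ℝ (fun y => fderiv ℝ (fun p => W p i) y d) x c • eb i
            + fderiv ℝ (fun p => W p i) x d
                • LC.nab (fun _ => c) (fun _ => eb i) x)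
          + (fderiv ℝ (fun p => W p i) x c • LC.nab (fun _ => d) (fun _ => eb i) x
            + W x i • LC.nab (fun _ => c) (LC.nab (fun _ => d) (fun _ => eb i)) x)) := by
    intro c d
    conv_lhs => rw [hfield d]
    rw [nab_sum_snd hg LC contDiff_const Finset.univ
      (fun i => fun y => fderiv ℝ (fun p => W p i) y d • eb i
        + W y i • LC.nab (fun _ => d) (fun _ => eb i) y)
      (fun i _ => ((hDWi i d).smul contDiff_const).add ((hWi hW i).smul (hΓ d i))) x]
    apply Finset.sum_congr rfl
    intro i _
    rw [nab_add_snd hg LC contDiff_const ((hDWi i d).fun_smul contDiff_const)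
      ((hWi hW i).fun_smul (hΓ d i)) x]
    congr 1
    · exact LC.leibniz (fun y => fderiv ℝ (fun p => W p i) y d) (fun _ => c)
        (fun _ => eb i) (hDWi i d) contDiff_const x
    · exact LC.leibniz (fun p => W p i) (fun _ => c)
        (LC.nab (fun _ => d) (fun _ => eb i)) (hWi hW i) (hΓ d i) x
  have lhs_eq : LC.nab (fun _ => a) (LC.nab (fun _ => b) W) x
      - LC.nab (fun _ => b) (LC.nab (fun _ => a) W) x
      = ∑ i, W x i • (LC.nab (fun _ => a) (LC.nab (fun _ => b) (fun _ => eb i)) x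
          - LC.nab (fun _ => b) (LC.nab (fun _ => a) (fun _ => eb i)) x) := by
    rw [main a b, main b a, ← Finset.sum_sub_distrib]
    apply Finset.sum_congr rfl
    intro i _
    rw [snd_symm (hWi hW i) x a b]
    rw [smul_sub]
    abel
  rw [lhs_eq]
  -- now the right-hand side
  have hconstf : ∀ d : Evec n, LC.nab (fun _ => d) (fun _ => W x)
      = fun y => ∑ i, W x i • LC.nab (fun _ => d) (fun _ => eb i) y := by
    intro d
    funext y
    have h1 : (fun _ : Evec n => W x) = fun _ => ∑ i, W x i • eb i := by
      funext p; rw [repr_eb (W x)]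
    conv_lhs => rw [h1]
    have h2 : (fun _ : Evec n => ∑ i, W x i • eb i)
        = fun p => ∑ i, W x i • (fun _ : Evec n => eb i) p := by funext p; simp
    rw [h2, nab_sum_snd hg LC contDiff_const Finset.univ
      (fun i => fun p => W x i • (fun _ : Evec n => eb i) p)
      (fun i _ => contDiff_const.fun_smul contDiff_const) y]
    exact Finset.sum_congr rfl fun i _ =>
      nab_smulc LC (W x i) contDiff_const (fun _ => d) y
  have hr : RCurv LC.nab a b (W x) x
      = ∑ i, W x i • (LC.nab (fun _ => a) (LC.nab (fun _ => b) (fun _ => eb i)) x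
          - LC.nab (fun _ => b) (LC.nab (fun _ => a) (fun _ => eb i)) x) := by
    rw [rcurv_eq, hconstf a, hconstf b]
    have houter : ∀ c d : Evec n,
        LC.nab (fun _ => c) (fun y => ∑ i, W x i
            • LC.nab (fun _ => d) (fun _ => eb i) y) x
          = ∑ i, W x i • LC.nab (fun _ => c)
              (LC.nab (fun _ => d) (fun _ => eb i)) x := by
      intro c d
      rw [nab_sum_snd hg LC contDiff_const Finset.univ
        (fun i => fun y => W x i • LC.nab (fun _ => d) (fun _ => eb i) y)
        (fun i _ => contDiff_const.fun_smul (hΓ d i)) x]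
      exact Finset.sum_congr rfl fun i _ =>
        nab_smulc LC (W x i) (hΓ d i) (fun _ => c) x
    rw [houter a b, houter b a, ← Finset.sum_sub_distrib]
    exact Finset.sum_congr rfl fun i _ => (smul_sub _ _ _).symm
  rw [hr]

lemma nab_const_comm (LC : LeviCivita g) (a b : Evec n) :
    LC.nab (fun _ => a) (fun _ => b) = LC.nab (fun _ => b) (fun _ => a) := by
  funext x
  have h := LC.torsion_free (fun _ => a) (fun _ => b) contDiff_const contDiff_const x
  rw [vbracket_const] at h
  exact sub_eq_zero.1 h

lemma bskew (hg : IsRiemannian g) (LC : LeviCivita g) {W : Evec n → Evec n}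
    (hW : ContDiff ℝ (⊤ : ℕ∞) W) (hK : IsKillingField g W) (u v z x : Evec n) :
    (g x (LC.nab (fun _ => u) (LC.nab (fun _ => v) W) x) z
      - g x (LC.nab (LC.nab (fun _ => u) (fun _ => v)) W x) z)
    + (g x (LC.nab (fun _ => u) (LC.nab (fun _ => z) W) x) v
      - g x (LC.nab (LC.nab (fun _ => u) (fun _ => z)) W x) v) = 0 := by
  have hFv : ContDiff ℝ (⊤ : ℕ∞) (LC.nab (fun _ => v) W) := nab_contDiff hg LC contDiff_const hW
  have hFz : ContDiff ℝ (⊤ : ℕ∞) (LC.nab (fun _ => z) W) := nab_contDiff hg LC contDiff_const hW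
  have hGv : ContDiff ℝ (⊤ : ℕ∞) (LC.nab (fun _ => u) (fun _ => v)) :=
    nab_contDiff hg LC contDiff_const contDiff_const
  have hGz : ContDiff ℝ (⊤ : ℕ∞) (LC.nab (fun _ => u) (fun _ => z)) :=
    nab_contDiff hg LC contDiff_const contDiff_const
  -- the function p ↦ g p (∇_v̄ W p) z + g p (∇_z̄ W p) v vanishes identically
  have hzero : (fun p => g p (LC.nab (fun _ => v) W p) z
      + g p (LC.nab (fun _ => z) W p) v) = fun _ => (0:ℝ) := by
    funext p
    exact kill' hg LC hW hK contDiff_const contDiff_const p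
  have hA : DifferentiableAt ℝ (fun p => g p (LC.nab (fun _ => v) W p) z) x :=
    (smooth_g_apply hg hFv contDiff_const).differentiable (by simp) x
  have hB : DifferentiableAt ℝ (fun p => g p (LC.nab (fun _ => z) W p) v) x :=
    (smooth_g_apply hg hFz contDiff_const).differentiable (by simp) x
  have hsum : fderiv ℝ (fun p => g p (LC.nab (fun _ => v) W p) z) x u
      + fderiv ℝ (fun p => g p (LC.nab (fun _ => z) W p) v) x u = 0 := by
    have := fderiv_fun_add hA hB
    have h2 : fderiv ℝ (fun p => g p (LC.nab (fun _ => v) W p) z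
        + g p (LC.nab (fun _ => z) W p) v) x = 0 := by
      rw [hzero]; exact fderiv_const_apply 0
    rw [h2] at this
    have := congrArg (fun (L : Evec n →L[ℝ] ℝ) => L u) this.symm
    simpa using this
  have e1 := LC.compat (fun _ => u) (LC.nab (fun _ => v) W) (fun _ => z)
    contDiff_const hFv contDiff_const x
  have e2 := LC.compat (fun _ => u) (LC.nab (fun _ => z) W) (fun _ => v)
    contDiff_const hFz contDiff_const x
  rw [e1, e2] at hsum
  -- Killing identity applied with Y := ∇_ū z̄ resp. ∇_ū v̄
  have k1 := kill' hg LC hW hK (contDiff_const (c := v)) hGz x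
  have k2 := kill' hg LC hW hK (contDiff_const (c := z)) hGv x
  linarith

lemma nab_const_W_zero (hg : IsRiemannian g) (LC : LeviCivita g)
    (hsec : ∀ x u v, g x (RCurv LC.nab u v v x) u ≤ 0) {W : Evec n → Evec n}
    (hW : ContDiff ℝ (⊤ : ℕ∞) W) (hK : IsKillingField g W)
    (hconst : ∀ x, g x (W x) (W x) = 1) (u x : Evec n) :
    LC.nab (fun _ => u) W x = 0 := by
  have hF : ContDiff ℝ (⊤ : ℕ∞) (LC.nab (fun _ => u) W) := nab_contDiff hg LC contDiff_const hW
  -- the length of ∇_ū W: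
  have hψ : (fun p => g p (LC.nab (fun _ => u) W p) (W p)) = fun _ => (0:ℝ) :=
    funext fun p => g_nabW_W hg LC hW hconst contDiff_const p
  have hexp := LC.compat (fun _ => u) (LC.nab (fun _ => u) W) W contDiff_const hF hW x
  rw [hψ] at hexp
  simp only [fderiv_fun_const, Pi.zero_apply, ContinuousLinearMap.zero_apply] at hexp
  -- hexp : 0 = g x (∇ū∇ūW x) (W x) + g x (∇ūW x) (∇ūW x)
  -- skew instances
  have skew1 := bskew hg LC hW hK u u (W x) x
  have skew2 := bskew hg LC hW hK (W x) u u x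
  -- difference instance via curvid
  have hdiff : (g x (LC.nab (fun _ => u) (LC.nab (fun _ => W x) W) x) u
      - g x (LC.nab (LC.nab (fun _ => u) (fun _ => W x)) W x) u)
      - (g x (LC.nab (fun _ => W x) (LC.nab (fun _ => u) W) x) u
      - g x (LC.nab (LC.nab (fun _ => W x) (fun _ => u)) W x) u)
      = g x (RCurv LC.nab u (W x) (W x) x) u := by
    rw [nab_const_comm LC u (W x)]
    have hc := curvid hg LC hW u (W x) x
    have := congrArg (fun t => g x t u) hc
    simp only [map_sub, ContinuousLinearMap.sub_apply] at this
    linarith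
  have hs := hsec x u (W x)
  -- correction terms vanish
  have c1 : g x (LC.nab (LC.nab (fun _ => u) (fun _ => u)) W x) (W x) = 0 :=
    g_nabW_W hg LC hW hconst (nab_contDiff hg LC contDiff_const contDiff_const) x
  -- conclude: g x (∇ūW x) (∇ūW x) ≤ 0
  apply eq_zero_of_g_nonpos hg (x := x) (v := LC.nab (fun _ => u) W x)
  linarith

end B

/-- On a Riemannian manifold `(M,h)` of nonpositive sectional curvature,
a Killing field `W` has constant length 1 (i.e. defines a strong Kropina structure) iff
`W` is parallel (and is somewhere of length 1). -/
theorem nonpositive_curvature_strong_kropina_iff_parallel {n : ℕ} (g : MetricT n)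
    (hg : IsRiemannian g) (LC : LeviCivita g)
    (hsec : ∀ x u v, g x (RCurv LC.nab u v v x) u ≤ 0)
    (W : Evec n → Evec n) (hWsm : ContDiff ℝ (⊤ : ℕ∞) W) (hKill : IsKillingField g W) :
    (∀ x, g x (W x) (W x) = 1) ↔
      ((∀ X : Evec n → Evec n, ContDiff ℝ (⊤ : ℕ∞) X → ∀ x, LC.nab X W x = 0) ∧
        ∃ x, g x (W x) (W x) = 1) := by
  constructor
  · intro hconst
    refine ⟨?_, ⟨0, hconst 0⟩⟩
    intro X hX x
    have h1 : LC.nab X W x = LC.nab (fun _ => X x) W x :=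
      nab_congr_fst hg LC hX contDiff_const hWsm rfl
    rw [h1]
    exact nab_const_W_zero hg LC hsec hWsm hKill hconst (X x) x
  · rintro ⟨hpar, x₀, h1⟩
    intro x
    have hdiff : Differentiable ℝ (fun p => g p (W p) (W p)) :=
      (smooth_g_apply hg hWsm hWsm).differentiable (by simp)
    have hzero : ∀ y, fderiv ℝ (fun p => g p (W p) (W p)) y = 0 := by
      intro y
      ext v
      have hc := LC.compat (fun _ => v) W W contDiff_const hWsm hWsm y
      rw [hpar (fun _ => v) contDiff_const y] at hc
      simpa using hc
    have hcc := is_const_of_fderiv_eq_zero hdiff hzero x x₀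
    exact hcc.trans h1
end
end

section
/- In ℝⁿ with the Euclidean metric and a constant unit vector W, the curves P(t) = p + (a+W)t with |a| = 1, a ≠ −W, are exactly the unit-speed geodesics of the strong Kropina metric F(y) = |y|²/(2⟨W,y⟩); moreover ⟨Ṗ(t), W⟩ = 1 + ⟨a,W⟩ > 0 and |Ṗ(t)|² = 2 + 2⟨a,W⟩ for all t. -/
noncomputable section

/-- The Euclidean Kropina metric with constant unit wind `W`: `F(y) = ‖y‖²/(2⟪W,y⟫)`. -/
def euclKropina {n : ℕ} (W y : EuclideanSpace ℝ (Fin n)) : ℝ :=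
  ‖y‖ ^ 2 / (2 * (inner ℝ W y : ℝ))

/-- Stationarity of the Kropina length functional on `[t₀,t₁]` among smooth admissible
variations with fixed endpoints. -/
def FStationaryOn {n : ℕ} (W : EuclideanSpace ℝ (Fin n)) (c : ℝ → EuclideanSpace ℝ (Fin n))
    (t₀ t₁ : ℝ) : Prop :=
  ∀ H : ℝ → ℝ → EuclideanSpace ℝ (Fin n),
    ContDiff ℝ (⊤ : ℕ∞) (fun p : ℝ × ℝ => H p.1 p.2) →
    (∀ t, H 0 t = c t) →
    (∀ s, H s t₀ = c t₀ ∧ H s t₁ = c t₁) →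
    (∀ s t, 0 < (inner ℝ W (deriv (H s) t) : ℝ)) →
    deriv (fun s => ∫ t in t₀..t₁, euclKropina W (deriv (H s) t)) 0 = 0

/-- A (forward) geodesic of the Euclidean strong Kropina space: a smooth `F`-admissible
curve which is stationary for the `F`-length on every compact subinterval. -/
def IsEuclKropinaGeodesic {n : ℕ} (W : EuclideanSpace ℝ (Fin n))
    (c : ℝ → EuclideanSpace ℝ (Fin n)) : Prop :=
  ContDiff ℝ (⊤ : ℕ∞) c ∧ (∀ t, 0 < (inner ℝ W (deriv c t) : ℝ)) ∧
    ∀ t₀ t₁ : ℝ, t₀ < t₁ → FStationaryOn W c t₀ t₁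

/-! ### Auxiliary lemmas -/

open scoped RealInnerProductSpace
open Polynomial

namespace EuclKropinaAux

variable {n : ℕ}
local notation "E" => EuclideanSpace ℝ (Fin n)

lemma deriv_line (p y : E) (t : ℝ) : deriv (fun s : ℝ => p + s • y) t = y := by
  have h : HasDerivAt (fun s : ℝ => p + s • y) y t := by
    simpa using ((hasDerivAt_id t).smul_const y).const_add p
  exact h.deriv

lemma slice_smooth {H : ℝ → ℝ → E} (hH : ContDiff ℝ (⊤ : ℕ∞) fun p : ℝ × ℝ => H p.1 p.2) (s : ℝ) :
    ContDiff ℝ (⊤ : ℕ∞) (H s) := hH.comp (contDiff_const.prodMk contDiff_id)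

lemma key_ineq (a W y : E) (ha : ‖a‖ = 1) (hW : ‖W‖ = 1) (hμ : 0 < 1 + ⟪a, W⟫)
    (hd : 0 < ⟪W, y⟫) :
    ⟪a, y⟫ / (1 + ⟪a, W⟫) ≤ euclKropina W y := by
  unfold euclKropina
  rw [div_le_div_iff₀ hμ (by positivity)]
  have hcs := real_inner_mul_inner_self_le (a + W) y
  have h1 : ⟪a + W, a + W⟫ = 2 + 2 * ⟪a, W⟫ := by
    rw [real_inner_add_add_self, real_inner_self_eq_norm_sq, real_inner_self_eq_norm_sq, ha, hW]
    ring
  have h2 : ⟪a + W, y⟫ = ⟪a, y⟫ + ⟪W, y⟫ := inner_add_left _ _ _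
  have h3 : ⟪y, y⟫ = ‖y‖ ^ 2 := real_inner_self_eq_norm_sq y
  rw [h1, h2, h3] at hcs
  nlinarith [sq_nonneg (⟪a, y⟫ - ⟪W, y⟫)]

lemma mu_pos (a W : E) (ha : ‖a‖ = 1) (hW : ‖W‖ = 1) (hne : a ≠ -W) : 0 < 1 + ⟪a, W⟫ := by
  have habs : |⟪a, W⟫| ≤ 1 := by
    have := abs_real_inner_le_norm a W
    rwa [ha, hW, one_mul] at this
  have hge : (-1 : ℝ) ≤ ⟪a, W⟫ := neg_le_of_abs_le habs
  rcases eq_or_lt_of_le hge with heq | hlt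
  · exfalso
    apply hne
    have hz : ‖a + W‖ ^ 2 = 0 := by
      rw [norm_add_sq_real, ha, hW, ← heq]; ring
    have h0 : a + W = 0 := by
      have := (pow_eq_zero_iff (n := 2) (by norm_num)).mp hz
      simpa [norm_eq_zero] using this
    rw [add_eq_zero_iff_eq_neg] at h0
    exact h0
  · linarith

lemma inner_deriv_FTC {g : ℝ → E} (hg : ContDiff ℝ (⊤ : ℕ∞) g) (a : E) (t₀ t₁ : ℝ) :
    ∫ t in t₀..t₁, ⟪a, deriv g t⟫ = ⟪a, g t₁⟫ - ⟪a, g t₀⟫ := by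
  have hcd : Continuous (deriv g) := hg.continuous_deriv (by simp)
  have hcont : Continuous fun t => ⟪a, deriv g t⟫ :=
    Continuous.inner (continuous_const : Continuous fun _ : ℝ => a) hcd
  refine intervalIntegral.integral_eq_sub_of_hasDerivAt
    (f := fun t => ⟪a, g t⟫) (fun t _ => ?_) (hcont.intervalIntegrable _ _)
  have := HasDerivAt.inner ℝ (hasDerivAt_const t a)
    ((hg.differentiable (by simp)).differentiableAt.hasDerivAt)
  simpa using this

lemma eK_line (W a : E) (hW : ‖W‖ = 1) (ha : ‖a‖ = 1) (hμ : 0 < 1 + ⟪a, W⟫) :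
    euclKropina W (a + W) = 1 := by
  unfold euclKropina
  have h1 : (inner ℝ W (a + W) : ℝ) = 1 + ⟪a, W⟫ := by
    rw [inner_add_right, real_inner_self_eq_norm_sq, hW, real_inner_comm]; ring
  have h2 : ‖a + W‖ ^ 2 = 2 + 2 * ⟪a, W⟫ := by
    rw [norm_add_sq_real, ha, hW]; ring
  rw [h1, h2, show (2 : ℝ) + 2 * ⟪a, W⟫ = 2 * (1 + ⟪a, W⟫) by ring,
    div_self (by positivity)]

lemma forward_stationary (W p a : E) (hW : ‖W‖ = 1) (ha : ‖a‖ = 1) (hμ : 0 < 1 + ⟪a, W⟫)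
    (t₀ t₁ : ℝ) (h01 : t₀ < t₁)
    (H : ℝ → ℝ → E) (hH : ContDiff ℝ (⊤ : ℕ∞) fun q : ℝ × ℝ => H q.1 q.2)
    (hH0 : ∀ t, H 0 t = p + t • (a + W))
    (hend : ∀ s, H s t₀ = p + t₀ • (a + W) ∧ H s t₁ = p + t₁ • (a + W))
    (hadm : ∀ s t, 0 < (inner ℝ W (deriv (H s) t) : ℝ)) :
    deriv (fun s => ∫ t in t₀..t₁, euclKropina W (deriv (H s) t)) 0 = 0 := by
  set L : ℝ → ℝ := fun s => ∫ t in t₀..t₁, euclKropina W (deriv (H s) t) with hL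
  have hμ' : (1 : ℝ) + ⟪a, W⟫ ≠ 0 := ne_of_gt hμ
  have hL0 : L 0 = t₁ - t₀ := by
    have hfun : H 0 = fun t => p + t • (a + W) := funext hH0
    have hone : (fun t => euclKropina W (deriv (H 0) t)) = fun _ => (1 : ℝ) := by
      funext t
      rw [hfun, deriv_line, eK_line W a hW ha hμ]
    simp [hL, hone]
  have hmin : ∀ s, L 0 ≤ L s := by
    intro s
    have hg : ContDiff ℝ (⊤ : ℕ∞) (H s) := slice_smooth hH s
    have hcd : Continuous (deriv (H s)) := hg.continuous_deriv (by simp)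
    have hWi : Continuous fun t => (inner ℝ W (deriv (H s) t) : ℝ) :=
      Continuous.inner (continuous_const : Continuous fun _ : ℝ => W) hcd
    have hFcont : Continuous fun t => euclKropina W (deriv (H s) t) := by
      unfold euclKropina
      exact (hcd.norm.pow 2).div (continuous_const.mul hWi)
        fun t => ne_of_gt (mul_pos two_pos (hadm s t))
    have hai : Continuous fun t => (inner ℝ a (deriv (H s) t) : ℝ) :=
      Continuous.inner (continuous_const : Continuous fun _ : ℝ => a) hcd
    have hlin_cont : Continuous fun t => ⟪a, deriv (H s) t⟫ / (1 + ⟪a, W⟫) := hai.div_const _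
    have hmono : ∫ t in t₀..t₁, ⟪a, deriv (H s) t⟫ / (1 + ⟪a, W⟫) ≤ L s :=
      intervalIntegral.integral_mono_on h01.le (hlin_cont.intervalIntegrable _ _)
        (hFcont.intervalIntegrable _ _)
        (fun t _ => key_ineq a W _ ha hW hμ (hadm s t))
    have e : ∀ τ : ℝ, ⟪a, p + τ • (a + W)⟫ = ⟪a, p⟫ + τ * (1 + ⟪a, W⟫) := by
      intro τ
      rw [inner_add_right, real_inner_smul_right, inner_add_right,
        real_inner_self_eq_norm_sq, ha]
      ring
    have hcomp : ∫ t in t₀..t₁, ⟪a, deriv (H s) t⟫ / (1 + ⟪a, W⟫) = t₁ - t₀ := by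
      rw [intervalIntegral.integral_div, inner_deriv_FTC hg a t₀ t₁, (hend s).1, (hend s).2,
        e, e, show ⟪a, p⟫ + t₁ * (1 + ⟪a, W⟫) - (⟪a, p⟫ + t₀ * (1 + ⟪a, W⟫))
          = (t₁ - t₀) * (1 + ⟪a, W⟫) by ring, mul_div_assoc, div_self hμ', mul_one]
    rw [hL0, ← hcomp]
    exact hmono
  have hlm : IsLocalMin L 0 := Filter.Eventually.of_forall hmin
  exact hlm.deriv_eq_zero

/-! ### Converse direction auxiliary lemmas -/

lemma poly_contDiff (p : ℝ[X]) : ContDiff ℝ (⊤ : ℕ∞) (fun x : ℝ => p.eval x) := by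
  have h0 : AnalyticOnNhd ℝ (fun x : ℝ => x) Set.univ := analyticOnNhd_id
  have h : AnalyticOnNhd ℝ (fun x : ℝ => p.eval x) Set.univ := by
    have := h0.aeval_polynomial p
    simpa only [Polynomial.coe_aeval_eq_eval] using this
  exact h.contDiff

def pint (p : ℝ[X]) : ℝ[X] := p.sum fun k a => C (a / (k + 1)) * X ^ (k + 1)

lemma derivative_pint (p : ℝ[X]) : (pint p).derivative = p := by
  unfold pint
  rw [Polynomial.sum_def, map_sum]
  have h : ∀ k ∈ p.support, derivative (C (p.coeff k / (k + 1)) * X ^ (k + 1))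
      = C (p.coeff k) * X ^ k := by
    intro k _
    rw [derivative_C_mul_X_pow]
    have : p.coeff k / (↑k + 1) * ↑(k + 1) = p.coeff k := by
      push_cast
      field_simp
    rw [this]
    simp
  rw [Finset.sum_congr rfl h]
  conv_rhs => rw [← Polynomial.sum_C_mul_X_pow_eq p]
  rw [Polynomial.sum_def]

lemma pint_FTC (p : ℝ[X]) (t₀ t₁ : ℝ) :
    ∫ t in t₀..t₁, p.eval t = (pint p).eval t₁ - (pint p).eval t₀ := by
  refine intervalIntegral.integral_eq_sub_of_hasDerivAt
    (f := fun t => (pint p).eval t) (fun t _ => ?_) ((p.continuous.intervalIntegrable _ _))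
  simpa [derivative_pint] using (pint p).hasDerivAt t

lemma ortho_poly_zero {h : ℝ → ℝ} (hcont : Continuous h) (t₀ t₁ : ℝ) (h01 : t₀ < t₁)
    (horth : ∀ p : ℝ[X], ∫ t in t₀..t₁, p.eval t * h t = 0) :
    ∀ τ ∈ Set.Icc t₀ t₁, h τ = 0 := by
  set K := ∫ t in t₀..t₁, |h t| with hK
  have hK0 : 0 ≤ K := intervalIntegral.integral_nonneg h01.le fun u _ => abs_nonneg _
  have hstep : ∀ ε > (0 : ℝ), (∫ t in t₀..t₁, h t ^ 2) ≤ ε * K := by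
    intro ε hε
    obtain ⟨p, hp⟩ := exists_polynomial_near_of_continuousOn t₀ t₁ h hcont.continuousOn ε hε
    have hsplit : (∫ t in t₀..t₁, h t ^ 2)
        = (∫ t in t₀..t₁, (h t - p.eval t) * h t) + ∫ t in t₀..t₁, p.eval t * h t := by
      rw [← intervalIntegral.integral_add (f := fun t => (h t - p.eval t) * h t)
        (g := fun t => p.eval t * h t)
        ((((hcont.sub p.continuous).mul hcont)).intervalIntegrable _ _)
        ((p.continuous.mul hcont).intervalIntegrable _ _)]
      congr 1
      funext t
      ring
    rw [hsplit, horth p, add_zero]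
    have hmono : (∫ t in t₀..t₁, (h t - p.eval t) * h t) ≤ ∫ t in t₀..t₁, ε * |h t| := by
      refine intervalIntegral.integral_mono_on h01.le
        (((hcont.sub p.continuous).mul hcont).intervalIntegrable _ _)
        ((continuous_const.mul hcont.abs).intervalIntegrable _ _) (fun t ht => ?_)
      calc (h t - p.eval t) * h t ≤ |(h t - p.eval t) * h t| := le_abs_self _
        _ = |h t - p.eval t| * |h t| := abs_mul _ _
        _ ≤ ε * |h t| := by
            apply mul_le_mul_of_nonneg_right _ (abs_nonneg _)
            rw [abs_sub_comm]
            exact (hp t ht).le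
    calc (∫ t in t₀..t₁, (h t - p.eval t) * h t) ≤ ∫ t in t₀..t₁, ε * |h t| := hmono
      _ = ε * K := by rw [intervalIntegral.integral_const_mul]
  have hsq0 : (∫ t in t₀..t₁, h t ^ 2) = 0 := by
    have hnn : 0 ≤ ∫ t in t₀..t₁, h t ^ 2 :=
      intervalIntegral.integral_nonneg h01.le fun u _ => sq_nonneg _
    rcases eq_or_lt_of_le hnn with he | hlt
    · exact he.symm
    · exfalso
      have h1 := hstep ((∫ t in t₀..t₁, h t ^ 2) / (2 * (K + 1))) (by positivity)
      have hpos2 : (0:ℝ) < 2 * (K + 1) := by linarith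
      rw [div_mul_eq_mul_div, le_div_iff₀ hpos2] at h1
      nlinarith
  intro τ hτ
  by_contra hne
  have hpos : 0 < ∫ t in t₀..t₁, h t ^ 2 :=
    intervalIntegral.integral_pos h01 (hcont.pow 2).continuousOn
      (fun x _ => sq_nonneg _) ⟨τ, hτ, by positivity⟩
  rw [hsq0] at hpos
  exact lt_irrefl _ hpos

lemma eK_expand (W Y v : E) (hv : ⟪W, v⟫ = 0) (hμ : 0 < ⟪W, Y⟫)
    (hY : ‖Y‖ ^ 2 = 2 * ⟪W, Y⟫) (r : ℝ) :
    euclKropina W (Y + r • v) = 1 + r * (⟪Y, v⟫ / ⟪W, Y⟫) + r ^ 2 * (‖v‖ ^ 2 / (2 * ⟪W, Y⟫)) := by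
  unfold euclKropina
  have hi : (inner ℝ W (Y + r • v) : ℝ) = ⟪W, Y⟫ := by
    rw [inner_add_right, real_inner_smul_right, hv]; ring
  have hn : ‖Y + r • v‖ ^ 2 = 2 * ⟪W, Y⟫ + 2 * (r * ⟪Y, v⟫) + r ^ 2 * ‖v‖ ^ 2 := by
    rw [norm_add_sq_real, real_inner_smul_right, norm_smul, mul_pow, hY]
    simp only [Real.norm_eq_abs, sq_abs]
    try ring
  rw [hi, hn]
  set A := ⟪W, Y⟫
  set B := ⟪Y, v⟫
  have hA : A ≠ 0 := ne_of_gt hμ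
  field_simp

lemma first_variation_zero (W : E) (c : ℝ → E) (hc : ContDiff ℝ (⊤ : ℕ∞) c)
    (hpos : ∀ t, 0 < (inner ℝ W (deriv c t) : ℝ))
    (hunit : ∀ t, euclKropina W (deriv c t) = 1)
    (t₀ t₁ : ℝ) (hstat : FStationaryOn W c t₀ t₁)
    (v : E) (hv : ⟪W, v⟫ = 0) (φ : ℝ[X]) (he0 : φ.eval t₀ = 0) (he1 : φ.eval t₁ = 0) :
    ∫ t in t₀..t₁, φ.derivative.eval t * (⟪deriv c t, v⟫ / ⟪W, deriv c t⟫) = 0 := by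
  set X : ℝ → E := deriv c with hXdef
  have hXc : Continuous X := hc.continuous_deriv (by simp)
  have hcd : Differentiable ℝ c := hc.differentiable (by simp)
  have hnorm : ∀ t, ‖X t‖ ^ 2 = 2 * ⟪W, X t⟫ := by
    intro t
    have h2 := hunit t
    unfold euclKropina at h2
    rw [div_eq_one_iff_eq (mul_ne_zero two_ne_zero (ne_of_gt (hpos t)))] at h2
    exact h2
  set H : ℝ → ℝ → E := fun s t => c t + (s * φ.eval t) • v with hHdef
  have hH : ContDiff ℝ (⊤ : ℕ∞) (fun q : ℝ × ℝ => H q.1 q.2) :=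
    (hc.comp contDiff_snd).add
      ((contDiff_fst.mul ((poly_contDiff φ).comp contDiff_snd)).smul contDiff_const)
  have hH0 : ∀ t, H 0 t = c t := by intro t; simp [hHdef]
  have hend : ∀ s, H s t₀ = c t₀ ∧ H s t₁ = c t₁ := by
    intro s; constructor <;> simp [hHdef, he0, he1]
  have hderiv : ∀ s t, deriv (H s) t = X t + (s * φ.derivative.eval t) • v := by
    intro s t
    have h1 : HasDerivAt (H s) (X t + (s * φ.derivative.eval t) • v) t :=
      ((hcd t).hasDerivAt).add (((φ.hasDerivAt t).const_mul s).smul_const v)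
    exact h1.deriv
  have hadm : ∀ s t, 0 < (inner ℝ W (deriv (H s) t) : ℝ) := by
    intro s t
    rw [hderiv s t, inner_add_right, real_inner_smul_right, hv]
    simpa using hpos t
  have hkey := hstat H hH hH0 hend hadm
  set h : ℝ → ℝ := fun t => ⟪X t, v⟫ / ⟪W, X t⟫ with hhdef
  set k : ℝ → ℝ := fun t => ‖v‖ ^ 2 / (2 * ⟪W, X t⟫) with hkdef
  have hWXc : Continuous fun t => (⟪W, X t⟫ : ℝ) :=
    Continuous.inner (continuous_const : Continuous fun _ : ℝ => W) hXc
  have hWXne : ∀ t, (⟪W, X t⟫ : ℝ) ≠ 0 := fun t => ne_of_gt (hpos t)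
  have hhc : Continuous h :=
    (Continuous.inner hXc (continuous_const : Continuous fun _ : ℝ => v)).div hWXc hWXne
  have hkc : Continuous k :=
    continuous_const.div (continuous_const.mul hWXc) fun t => by
      have := hpos t; positivity
  set A : ℝ := ∫ t in t₀..t₁, φ.derivative.eval t * h t with hAdef
  set B : ℝ := ∫ t in t₀..t₁, (φ.derivative.eval t) ^ 2 * k t with hBdef
  have hL : (fun s => ∫ t in t₀..t₁, euclKropina W (deriv (H s) t))
      = fun s => (t₁ - t₀) + (A * s + B * s ^ 2) := by
    funext s
    have hpt : ∀ t, euclKropina W (deriv (H s) t)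
        = 1 + s * (φ.derivative.eval t * h t) + s ^ 2 * ((φ.derivative.eval t) ^ 2 * k t) := by
      intro t
      rw [hderiv s t, eK_expand W (X t) v hv (hpos t) (hnorm t)]
      simp only [hhdef, hkdef]
      ring
    rw [intervalIntegral.integral_congr (g := fun t =>
      1 + s * (φ.derivative.eval t * h t) + s ^ 2 * ((φ.derivative.eval t) ^ 2 * k t))
      (fun t _ => hpt t)]
    have hi1 : IntervalIntegrable (fun _ : ℝ => (1 : ℝ)) MeasureTheory.volume t₀ t₁ :=
      intervalIntegrable_const
    have hc2 : Continuous fun t => φ.derivative.eval t * h t :=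
      φ.derivative.continuous.mul hhc
    have hc3 : Continuous fun t => (φ.derivative.eval t) ^ 2 * k t :=
      (φ.derivative.continuous.pow 2).mul hkc
    rw [intervalIntegral.integral_add
          (f := fun t => 1 + s * (φ.derivative.eval t * h t))
          (g := fun t => s ^ 2 * ((φ.derivative.eval t) ^ 2 * k t)) (hi1.add (((continuous_const.mul hc2 :
          Continuous fun t => s * (φ.derivative.eval t * h t))).intervalIntegrable _ _))
        (((continuous_const.mul hc3 :
          Continuous fun t => s ^ 2 * ((φ.derivative.eval t) ^ 2 * k t))).intervalIntegrable _ _),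
      intervalIntegral.integral_add (f := fun _ => (1 : ℝ))
          (g := fun t => s * (φ.derivative.eval t * h t)) hi1 (((continuous_const.mul hc2 :
          Continuous fun t => s * (φ.derivative.eval t * h t))).intervalIntegrable _ _)]
    rw [intervalIntegral.integral_const_mul, intervalIntegral.integral_const_mul,
      intervalIntegral.integral_const]
    simp only [smul_eq_mul, mul_one, ← hAdef, ← hBdef]
    ring
  rw [hL] at hkey
  have hD : HasDerivAt (fun s : ℝ => (t₁ - t₀) + (A * s + B * s ^ 2)) A 0 := by
    have h1 : HasDerivAt (fun s : ℝ => A * s + B * s ^ 2) (A * 1 + B * (2 * 0 ^ 1)) 0 :=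
      ((hasDerivAt_id 0).const_mul A).add ((hasDerivAt_pow 2 0).const_mul B)
    simpa using h1.const_add (t₁ - t₀)
  rw [hD.deriv] at hkey
  exact hkey

lemma h_const (W : E) (c : ℝ → E) (hc : ContDiff ℝ (⊤ : ℕ∞) c)
    (hpos : ∀ t, 0 < (inner ℝ W (deriv c t) : ℝ))
    (hunit : ∀ t, euclKropina W (deriv c t) = 1)
    (hstat : ∀ t₀ t₁ : ℝ, t₀ < t₁ → FStationaryOn W c t₀ t₁)
    (v : E) (hv : ⟪W, v⟫ = 0) (T : ℝ) :
    ⟪deriv c T, v⟫ / ⟪W, deriv c T⟫ = ⟪deriv c 0, v⟫ / ⟪W, deriv c 0⟫ := by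
  set X : ℝ → E := deriv c with hXdef
  have hXc : Continuous X := hc.continuous_deriv (by simp)
  set h : ℝ → ℝ := fun t => ⟪X t, v⟫ / ⟪W, X t⟫ with hhdef
  have hWXc : Continuous fun t => (⟪W, X t⟫ : ℝ) :=
    Continuous.inner (continuous_const : Continuous fun _ : ℝ => W) hXc
  have hWXne : ∀ t, (⟪W, X t⟫ : ℝ) ≠ 0 := fun t => ne_of_gt (hpos t)
  have hhc : Continuous h :=
    (Continuous.inner hXc (continuous_const : Continuous fun _ : ℝ => v)).div hWXc hWXne
  set t₀ : ℝ := min T 0 - 1 with ht₀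
  set t₁ : ℝ := max T 0 + 1 with ht₁
  have h01 : t₀ < t₁ := by
    have h1 : min T 0 ≤ max T 0 := le_trans (min_le_left _ _) (le_max_left _ _)
    simp only [ht₀, ht₁]
    linarith
  have hlen : t₁ - t₀ ≠ 0 := sub_ne_zero.mpr (ne_of_gt h01)
  set hbar : ℝ := (∫ t in t₀..t₁, h t) / (t₁ - t₀) with hhbar
  have hinth : (∫ t in t₀..t₁, h t) = hbar * (t₁ - t₀) := by
    rw [hhbar]; field_simp
  set g : ℝ → ℝ := fun t => h t - hbar with hgdef
  have hgc : Continuous g := hhc.sub continuous_const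
  have horth : ∀ p : ℝ[X], ∫ t in t₀..t₁, p.eval t * g t = 0 := by
    intro p
    set m : ℝ := (∫ t in t₀..t₁, p.eval t) / (t₁ - t₀) with hm
    have hintp : (∫ t in t₀..t₁, p.eval t) = m * (t₁ - t₀) := by
      rw [hm]; field_simp
    set ψ : ℝ[X] := p - C m with hψ
    have hψeval : ∀ t : ℝ, ψ.eval t = p.eval t - m := by
      intro t; simp [hψ]
    have hψint : (∫ t in t₀..t₁, ψ.eval t) = 0 := by
      have : (fun t => ψ.eval t) = fun t => p.eval t - m := funext hψeval
      rw [this, intervalIntegral.integral_sub (p.continuous.intervalIntegrable _ _)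
        intervalIntegrable_const, intervalIntegral.integral_const, hintp]
      simp [smul_eq_mul]
      ring
    set φ : ℝ[X] := pint ψ - C ((pint ψ).eval t₀) with hφ
    have he0 : φ.eval t₀ = 0 := by simp [hφ]
    have he1 : φ.eval t₁ = 0 := by
      have := pint_FTC ψ t₀ t₁
      rw [hψint] at this
      simp [hφ]
      linarith
    have hder : φ.derivative = ψ := by
      rw [hφ, derivative_sub, derivative_pint, derivative_C, sub_zero]
    have hfv := first_variation_zero W c hc hpos hunit t₀ t₁ (hstat t₀ t₁ h01) v hv φ he0 he1
    rw [hder] at hfv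
    -- hfv : ∫ ψ.eval t * h t = 0
    have hint_mh : (∫ t in t₀..t₁, m * h t) = m * (hbar * (t₁ - t₀)) := by
      rw [intervalIntegral.integral_const_mul, hinth]
    have hint_ph : (∫ t in t₀..t₁, p.eval t * hbar) = m * (t₁ - t₀) * hbar := by
      rw [intervalIntegral.integral_mul_const, hintp]
    have hsplit : (∫ t in t₀..t₁, p.eval t * g t)
        = (∫ t in t₀..t₁, ψ.eval t * h t) + ((∫ t in t₀..t₁, m * h t)
            - ∫ t in t₀..t₁, p.eval t * hbar) := by
      rw [← intervalIntegral.integral_sub (f := fun t => m * h t) (g := fun t => p.eval t * hbar)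
        ((continuous_const.mul hhc).intervalIntegrable _ _)
        ((p.continuous.mul continuous_const).intervalIntegrable _ _),
        ← intervalIntegral.integral_add (f := fun t => ψ.eval t * h t)
        (g := fun t => m * h t - p.eval t * hbar) ((ψ.continuous.mul hhc).intervalIntegrable _ _)
        (((continuous_const.mul hhc).sub
          (p.continuous.mul continuous_const)).intervalIntegrable _ _)]
      apply intervalIntegral.integral_congr
      intro t _
      simp only [hgdef, hψeval]
      ring
    rw [hsplit, hfv, hint_mh, hint_ph]
    ring
  have hzero := ortho_poly_zero hgc t₀ t₁ h01 horth
  have hTmem : T ∈ Set.Icc t₀ t₁ := by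
    constructor
    · simp only [ht₀]; have := min_le_left T 0; linarith
    · simp only [ht₁]; have := le_max_left T 0; linarith
  have h0mem : (0 : ℝ) ∈ Set.Icc t₀ t₁ := by
    constructor
    · simp only [ht₀]; have := min_le_right T 0; linarith
    · simp only [ht₁]; have := le_max_right T 0; linarith
  have e1 := hzero T hTmem
  have e2 := hzero 0 h0mem
  simp only [hgdef] at e1 e2
  have : h T = h 0 := by linarith [e1, e2]
  simpa [hhdef] using this

end EuclKropinaAux

open EuclKropinaAux in
/-- In `ℝⁿ` with the Euclidean metric and a constant unit wind `W`, the curves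
`P(t) = p + t•(a+W)` with `‖a‖ = 1`, `a ≠ -W` are exactly the unit-speed geodesics of the
strong Kropina metric `F(y) = ‖y‖²/(2⟪W,y⟫)`; moreover `⟪Ṗ(t), W⟫ = 1 + ⟪a,W⟫ > 0` and
`‖Ṗ(t)‖² = 2 + 2⟪a,W⟫` for all `t`. -/
theorem euclidean_kropina_geodesics {n : ℕ} (W : EuclideanSpace ℝ (Fin n)) (hW : ‖W‖ = 1) :
    (∀ p a : EuclideanSpace ℝ (Fin n), ‖a‖ = 1 → a ≠ -W →
      IsEuclKropinaGeodesic W (fun t => p + t • (a + W)) ∧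
      (∀ t : ℝ, euclKropina W (deriv (fun s => p + s • (a + W)) t) = 1) ∧
      (∀ t : ℝ, (inner ℝ (deriv (fun s => p + s • (a + W)) t) W : ℝ) = 1 + (inner ℝ a W : ℝ) ∧
        0 < 1 + (inner ℝ a W : ℝ) ∧
        ‖deriv (fun s => p + s • (a + W)) t‖ ^ 2 = 2 + 2 * (inner ℝ a W : ℝ))) ∧
    (∀ c : ℝ → EuclideanSpace ℝ (Fin n), IsEuclKropinaGeodesic W c →
      (∀ t, euclKropina W (deriv c t) = 1) →
      ∃ a : EuclideanSpace ℝ (Fin n), ‖a‖ = 1 ∧ a ≠ -W ∧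
        ∀ t : ℝ, c t = c 0 + t • (a + W)) := by
  constructor
  · intro p a ha hne
    have hμ : 0 < 1 + (⟪a, W⟫ : ℝ) := mu_pos a W ha hW hne
    refine ⟨⟨?_, ?_, ?_⟩, ?_, ?_⟩
    · exact contDiff_const.add (contDiff_id.smul contDiff_const)
    · intro t
      rw [deriv_line]
      have h1 : (inner ℝ W (a + W) : ℝ) = 1 + ⟪a, W⟫ := by
        rw [inner_add_right, real_inner_self_eq_norm_sq, hW, real_inner_comm]; ring
      rw [h1]; exact hμ
    · intro t₀ t₁ h01
      intro H hH hH0 hend hadm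
      exact forward_stationary W p a hW ha hμ t₀ t₁ h01 H hH hH0 hend hadm
    · intro t
      rw [deriv_line]
      exact eK_line W a hW ha hμ
    · intro t
      rw [deriv_line]
      refine ⟨?_, hμ, ?_⟩
      · rw [inner_add_left, real_inner_self_eq_norm_sq, hW]; ring
      · rw [norm_add_sq_real, ha, hW]; ring
  · intro c hgeo hunit
    obtain ⟨hc, hpos, hstat⟩ := hgeo
    set X : ℝ → EuclideanSpace ℝ (Fin n) := deriv c with hXdef
    have hcd : Differentiable ℝ c := hc.differentiable (by simp)
    have hnorm : ∀ t, ‖X t‖ ^ 2 = 2 * ⟪W, X t⟫ := by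
      intro t
      have h2 := hunit t
      unfold euclKropina at h2
      rw [div_eq_one_iff_eq (mul_ne_zero two_ne_zero (ne_of_gt (hpos t)))] at h2
      exact h2
    -- the normalized velocity q is constant
    set q : ℝ → EuclideanSpace ℝ (Fin n) := fun t => (⟪W, X t⟫ : ℝ)⁻¹ • X t with hqdef
    have hqW : ∀ t, (⟪W, q t⟫ : ℝ) = 1 := by
      intro t
      rw [hqdef]
      simp only
      rw [real_inner_smul_right]
      exact inv_mul_cancel₀ (ne_of_gt (hpos t))
    have hq_inner : ∀ t (v : EuclideanSpace ℝ (Fin n)), ⟪q t, v⟫ = ⟪X t, v⟫ / ⟪W, X t⟫ := by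
      intro t v
      rw [hqdef]
      simp only
      rw [real_inner_smul_left, div_eq_inv_mul]
    have hqconst : ∀ T, q T = q 0 := by
      intro T
      set v : EuclideanSpace ℝ (Fin n) := q T - q 0 with hvdef
      have hv : (⟪W, v⟫ : ℝ) = 0 := by
        rw [hvdef, inner_sub_right, hqW, hqW, sub_self]
      have hA := h_const W c hc hpos hunit hstat v hv T
      have h1 : ⟪q T, v⟫ = ⟪q 0, v⟫ := by
        rw [hq_inner, hq_inner]; exact hA
      have h2 : ⟪v, v⟫ = 0 := by
        rw [hvdef, inner_sub_left]
        rw [hvdef] at h1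
        linarith
      have := inner_self_eq_zero.mp h2
      rw [hvdef, sub_eq_zero] at this
      exact this
    have hμconst : ∀ T, (⟪W, X T⟫ : ℝ) = ⟪W, X 0⟫ := by
      intro T
      have hq2 : ∀ t, ‖q t‖ ^ 2 = 2 * (⟪W, X t⟫ : ℝ)⁻¹ := by
        intro t
        rw [hqdef]
        simp only
        rw [norm_smul, mul_pow, Real.norm_eq_abs, sq_abs, hnorm t]
        set μt : ℝ := ⟪W, X t⟫ with hμt
        have h3 : μt ≠ 0 := ne_of_gt (hpos t)
        field_simp
      have := congrArg (fun z : EuclideanSpace ℝ (Fin n) => ‖z‖ ^ 2) (hqconst T)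
      simp only [hq2] at this
      have h4 : (⟪W, X T⟫ : ℝ)⁻¹ = (⟪W, X 0⟫ : ℝ)⁻¹ := by linarith
      exact inv_inj.mp h4
    have hXconst : ∀ T, X T = X 0 := by
      intro T
      have h5 : X T = (⟪W, X T⟫ : ℝ) • q T := by
        rw [hqdef]
        simp only
        rw [smul_inv_smul₀ (ne_of_gt (hpos T))]
      have h6 : X 0 = (⟪W, X 0⟫ : ℝ) • q 0 := by
        rw [hqdef]
        simp only
        rw [smul_inv_smul₀ (ne_of_gt (hpos 0))]
      rw [h5, h6, hμconst T, hqconst T]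
    -- hence c is affine
    have haffine : ∀ t, c t = c 0 + t • X 0 := by
      intro t
      set f : ℝ → EuclideanSpace ℝ (Fin n) := fun t => c t - t • X 0 with hfdef
      have hf : ∀ x, HasDerivAt f 0 x := by
        intro x
        have h7 : HasDerivAt f (X x - X 0) x :=
          ((hcd x).hasDerivAt).sub ((hasDerivAt_id x).smul_const (X 0) |>.congr_deriv (by simp))
        rw [hXconst x, sub_self] at h7
        exact h7
      have hfd : Differentiable ℝ f := fun x => (hf x).differentiableAt
      have hconst : f t = f 0 := by
        apply is_const_of_deriv_eq_zero hfd
        intro x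
        exact (hf x).deriv
      simp only [hfdef] at hconst
      rw [zero_smul, sub_zero] at hconst
      rw [← hconst]
      abel
    refine ⟨X 0 - W, ?_, ?_, ?_⟩
    · have h8 : ‖X 0 - W‖ ^ 2 = 1 := by
        rw [norm_sub_sq_real, hnorm 0, hW, real_inner_comm]
        ring
      nlinarith [norm_nonneg (X 0 - W)]
    · intro heq
      have h9 : X 0 = 0 := by
        have := congrArg (fun z : EuclideanSpace ℝ (Fin n) => z + W) heq
        simpa [sub_add_cancel] using this
      have := hpos 0
      rw [h9] at this
      simp at this
    · intro t
      rw [sub_add_cancel]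
      exact haffine t
end
end

section
/- In the Euclidean strong Kropina space (ℝⁿ, F) with constant unit wind W, a point q ≠ p can be joined to p by an F-geodesic starting at p if and only if ⟨q − p, W⟩ > 0. In particular if ⟨q − p, W⟩ = 0 there is no F-geodesic from p to q nor from q to p. -/
/-!
The geodesic `t ↦ p + t • (a + W)` moves in the direction `a + W`, and for unit vectors `a`, `W`
one has `⟪a + W, W⟫ = ‖a + W‖² / 2`, which is positive unless `a = -W`; so `q - p` has positive
`W`-component. Conversely, a vector `v` with `⟪v, W⟫ > 0` is `t • (a + W)` for the time
`t = ‖v‖² / (2 ⟪v, W⟫)`, at which `a = t⁻¹ • v - W` is a unit vector.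
-/

open RealInnerProductSpace

namespace Kropina

variable {E : Type*} [NormedAddCommGroup E] [InnerProductSpace ℝ E]

theorem inner_add_right_eq_half_norm_add_sq {a W : E} (h : ‖a‖ = ‖W‖) :
    ⟪a + W, W⟫ = ‖a + W‖ ^ 2 / 2 := by
  rw [norm_add_sq_real, inner_add_left, real_inner_self_eq_norm_sq, h]
  ring

theorem inner_add_right_pos {a W : E} (h : ‖a‖ = ‖W‖) (haW : a ≠ -W) : 0 < ⟪a + W, W⟫ := by
  have hne : a + W ≠ 0 := fun h0 => haW (add_eq_zero_iff_eq_neg.mp h0)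
  rw [inner_add_right_eq_half_norm_add_sq h]
  positivity

theorem norm_inv_smul_sub_eq_one {v W : E} (hW : ‖W‖ = 1) (hv : 0 < ⟪v, W⟫) :
    ‖(‖v‖ ^ 2 / (2 * ⟪v, W⟫))⁻¹ • v - W‖ = 1 := by
  have hv0 : v ≠ 0 := by rintro rfl; simp at hv
  have hsq : ‖(‖v‖ ^ 2 / (2 * ⟪v, W⟫))⁻¹ • v - W‖ ^ 2 = 1 := by
    rw [norm_sub_sq_real, norm_smul, real_inner_smul_left, hW, Real.norm_eq_abs,
      abs_of_pos (by positivity)]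
    field_simp
    ring
  exact (pow_eq_one_iff_of_nonneg (norm_nonneg _) two_ne_zero).mp hsq

theorem exists_unit_ray_iff {v W : E} (hW : ‖W‖ = 1) :
    (∃ a : E, ‖a‖ = 1 ∧ a ≠ -W ∧ ∃ t : ℝ, 0 < t ∧ v = t • (a + W)) ↔ 0 < ⟪v, W⟫ := by
  constructor
  · rintro ⟨a, ha, haW, t, ht, rfl⟩
    rw [real_inner_smul_left]
    exact mul_pos ht (inner_add_right_pos (ha.trans hW.symm) haW)
  · intro hv
    set t := ‖v‖ ^ 2 / (2 * ⟪v, W⟫)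
    have hv0 : v ≠ 0 := by rintro rfl; simp at hv
    have ht : 0 < t := by positivity
    refine ⟨t⁻¹ • v - W, norm_inv_smul_sub_eq_one hW hv, ?_, t, ht, ?_⟩
    · rw [Ne, sub_eq_neg_self, smul_eq_zero, not_or]
      exact ⟨inv_ne_zero ht.ne', hv0⟩
    · rw [sub_add_cancel, smul_inv_smul₀ ht.ne']

end Kropina

theorem euclidean_kropina_geodesic_connectivity_general {n : ℕ}
    (W p q : EuclideanSpace ℝ (Fin n)) (hW : ‖W‖ = 1) :
    ((∃ a : EuclideanSpace ℝ (Fin n), ‖a‖ = 1 ∧ a ≠ -W ∧ ∃ t : ℝ, 0 < t ∧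
        q = p + t • (a + W)) ↔ 0 < (inner ℝ (q - p) W : ℝ)) ∧
    ((inner ℝ (q - p) W : ℝ) = 0 →
      (¬ ∃ a : EuclideanSpace ℝ (Fin n), ‖a‖ = 1 ∧ a ≠ -W ∧ ∃ t : ℝ, 0 < t ∧
        q = p + t • (a + W)) ∧
      (¬ ∃ a : EuclideanSpace ℝ (Fin n), ‖a‖ = 1 ∧ a ≠ -W ∧ ∃ t : ℝ, 0 < t ∧
        p = q + t • (a + W))) := by
  have reach (x y : EuclideanSpace ℝ (Fin n)) :
      (∃ a : EuclideanSpace ℝ (Fin n), ‖a‖ = 1 ∧ a ≠ -W ∧ ∃ t : ℝ, 0 < t ∧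
        x = y + t • (a + W)) ↔ 0 < ⟪x - y, W⟫ := by
    simp_rw [← sub_eq_iff_eq_add']
    exact Kropina.exists_unit_ray_iff hW
  refine ⟨reach q p, fun h0 => ⟨?_, ?_⟩⟩
  · rw [reach, h0]
    exact lt_irrefl 0
  · rw [reach, ← neg_sub, inner_neg_left, h0, neg_zero]
    exact lt_irrefl 0

/-- In the Euclidean strong Kropina space `(ℝⁿ, F)` with constant unit wind
`W` (where the `F`-geodesics emanating from `p` are exactly the rays
`P(t) = p + t•(a+W)`, `‖a‖ = 1`, `a ≠ -W`, `t > 0`), a point `q ≠ p` can be joined to `p`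
by an `F`-geodesic starting at `p` iff `⟪q - p, W⟫ > 0`; in particular if
`⟪q - p, W⟫ = 0` there is no `F`-geodesic from `p` to `q` nor from `q` to `p`. -/
theorem euclidean_kropina_geodesic_connectivity {n : ℕ}
    (W p q : EuclideanSpace ℝ (Fin n)) (hW : ‖W‖ = 1) (hpq : q ≠ p) :
    ((∃ a : EuclideanSpace ℝ (Fin n), ‖a‖ = 1 ∧ a ≠ -W ∧ ∃ t : ℝ, 0 < t ∧
        q = p + t • (a + W)) ↔ 0 < (inner ℝ (q - p) W : ℝ)) ∧
    ((inner ℝ (q - p) W : ℝ) = 0 →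
      (¬ ∃ a : EuclideanSpace ℝ (Fin n), ‖a‖ = 1 ∧ a ≠ -W ∧ ∃ t : ℝ, 0 < t ∧
        q = p + t • (a + W)) ∧
      (¬ ∃ a : EuclideanSpace ℝ (Fin n), ‖a‖ = 1 ∧ a ≠ -W ∧ ∃ t : ℝ, 0 < t ∧
        p = q + t • (a + W))) :=
  euclidean_kropina_geodesic_connectivity_general W p q hW
end

section
/- On the universal cover ℝ² of the flat cylinder S¹ × ℝ with strong Kropina metric of navigation data (flat metric, W = (A,B)) with A² + B² = 1, the F-geodesic from p̃ = (p¹,p²) passing through q̃ = (q¹,q²) with ⟨W, q̃−p̃⟩ > 0 reaches q̃ at parameter s₀ = |q̃−p̃|² / (2⟨W, q̃−p̃⟩), and its initial velocity is Ṗ(0) = (2⟨W, q̃−p̃⟩/|q̃−p̃|²) · (q̃−p̃). -/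
/-! The chord `q - p = s₀ • (a + W)` of a geodesic with `‖a‖ = ‖W‖` satisfies
`‖q - p‖² = 2 s₀ ⟪W, q - p⟫`, because `‖a + W‖² = 2 ⟪W, a + W⟫` is the law of cosines for
two vectors of equal length. Both formulas follow from this identity, the velocity being
`a + W = s₀⁻¹ • (q - p)`. -/

section Chord

variable {E : Type*} [NormedAddCommGroup E] [InnerProductSpace ℝ E]

theorem norm_add_sq_eq_two_mul_inner_add {a W : E} (h : ‖a‖ = ‖W‖) :
    ‖a + W‖ ^ 2 = 2 * inner ℝ W (a + W) := by
  rw [norm_add_sq_real, inner_add_right, real_inner_self_eq_norm_sq, real_inner_comm, h]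
  ring

theorem norm_smul_add_sq_eq_two_mul_inner {a W : E} (h : ‖a‖ = ‖W‖) (s : ℝ) :
    ‖s • (a + W)‖ ^ 2 = 2 * s * inner ℝ W (s • (a + W)) := by
  rw [norm_smul, mul_pow, norm_add_sq_eq_two_mul_inner_add h, real_inner_smul_right,
    Real.norm_eq_abs, sq_abs]
  ring

theorem deriv_const_add_smul_const (p v : E) (x : ℝ) :
    deriv (fun s : ℝ => p + s • v) x = v := by
  simpa using (((hasDerivAt_id x).smul_const v).const_add p).deriv

end Chord

theorem cylinder_cover_kropina_geodesic_general
    (W p q : EuclideanSpace ℝ (Fin 2)) (hW : ‖W‖ = 1)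
    (hpos : 0 < (inner ℝ W (q - p) : ℝ))
    (a : EuclideanSpace ℝ (Fin 2)) (ha : ‖a‖ = 1)
    (s₀ : ℝ) (hreach : p + s₀ • (a + W) = q) :
    s₀ = ‖q - p‖ ^ 2 / (2 * (inner ℝ W (q - p) : ℝ)) ∧
    deriv (fun s : ℝ => p + s • (a + W)) 0
      = (2 * (inner ℝ W (q - p) : ℝ) / ‖q - p‖ ^ 2) • (q - p) := by
  have hchord : q - p = s₀ • (a + W) := by rw [← hreach, add_sub_cancel_left]
  have hnorm : ‖q - p‖ ^ 2 = 2 * s₀ * inner ℝ W (q - p) := by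
    rw [hchord]; exact norm_smul_add_sq_eq_two_mul_inner (ha.trans hW.symm) s₀
  have hs₀ : s₀ ≠ 0 := by
    rintro rfl
    simp [hchord] at hpos
  have hs₀_eq : s₀ = ‖q - p‖ ^ 2 / (2 * inner ℝ W (q - p)) := by
    rw [hnorm]; field_simp
  refine ⟨hs₀_eq, ?_⟩
  have hcoef : 2 * inner ℝ W (q - p) / ‖q - p‖ ^ 2 = s₀⁻¹ := by rw [hs₀_eq, inv_div]
  rw [deriv_const_add_smul_const, hcoef, hchord, smul_smul, inv_mul_cancel₀ hs₀, one_smul]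

/-- On the universal cover `ℝ²` of the flat cylinder with strong Kropina
metric of navigation data (flat metric, constant unit wind `W = (A,B)`), the
`F`-geodesics from `p̃` are `P(s) = p̃ + s•(a+W)` with `‖a‖ = 1`, `a ≠ -W`.  If such a
geodesic passes through `q̃` (with `⟪W, q̃ - p̃⟫ > 0`) at some parameter `s₀ > 0`, then
`s₀ = ‖q̃-p̃‖²/(2⟪W, q̃-p̃⟫)` and the initial velocity is
`Ṗ(0) = (2⟪W, q̃-p̃⟫/‖q̃-p̃‖²) • (q̃-p̃)`. -/
theorem cylinder_cover_kropina_geodesic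
    (W p q : EuclideanSpace ℝ (Fin 2)) (hW : ‖W‖ = 1) (hne : q ≠ p)
    (hpos : 0 < (inner ℝ W (q - p) : ℝ))
    (a : EuclideanSpace ℝ (Fin 2)) (ha : ‖a‖ = 1) (hna : a ≠ -W)
    (s₀ : ℝ) (hs₀ : 0 < s₀) (hreach : p + s₀ • (a + W) = q) :
    s₀ = ‖q - p‖ ^ 2 / (2 * (inner ℝ W (q - p) : ℝ)) ∧
    deriv (fun s : ℝ => p + s • (a + W)) 0
      = (2 * (inner ℝ W (q - p) : ℝ) / ‖q - p‖ ^ 2) • (q - p) :=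
  cylinder_cover_kropina_geodesic_general W p q hW hpos a ha s₀ hreach
end
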